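/- Let τ be a binary phylogenetic tree on n ≥ 4 leaves and let M be the maximum of ‖σ‖ over all non-trivial splits σ ∈ Σ*(τ). Then ⌈n/3⌉ ≤ M ≤ ⌊n/2⌋. -/

import Mathlib

open SimpleGraph

/-- An (unrooted) phylogenetic tree on `n` leaves with vertex type `V`:
a tree whose degree-one vertices are exactly the images of the `n` leaf labels. -/
structure PhyloTree (n : ℕ) (V : Type) [Fintype V] where
  G : SimpleGraph V
  isTree : G.IsTree
  leaf : Fin n → V
  leaf_inj : Function.Injective leaf
  leaf_iff : ∀ v : V, (G.neighborSet v).ncard = 1 ↔ ∃ i, leaf i = v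

variable {n : ℕ} {V : Type} [Fintype V]

/-- Number of leaves on the `u`-side after deleting the edge `{u,v}`. -/
noncomputable def splitSide (G : SimpleGraph V) (leaf : Fin n → V) (u v : V) : ℕ :=
  {i : Fin n | (G.deleteEdges {s(u, v)}).Reachable (leaf i) u}.ncard

/-- The size `‖σ‖ = min(|A|,|B|)` of the split induced by an edge. -/
noncomputable def splitSizeE (T : PhyloTree n V) : Sym2 V → ℕ :=
  Sym2.lift ⟨fun u v => min (splitSide T.G T.leaf u v) (splitSide T.G T.leaf v u),
    fun _ _ => min_comm _ _⟩

/-- `Φ_f(τ) = ∑_{σ ∈ Σ*(τ)} f(‖σ‖)`, the sum over non-trivial splits (inner edges). -/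
noncomputable def Phi (T : PhyloTree n V) (f : ℕ → ℝ) : ℝ :=
  ∑ᶠ e ∈ {e : Sym2 V | e ∈ T.G.edgeSet ∧ 2 ≤ splitSizeE T e}, f (splitSizeE T e)

/-- `m(τ)_j = |{σ ∈ Σ*(τ) : ‖σ‖ ≤ j}|`. -/
noncomputable def mseq (T : PhyloTree n V) (j : ℕ) : ℕ :=
  {e : Sym2 V | e ∈ T.G.edgeSet ∧ 2 ≤ splitSizeE T e ∧ splitSizeE T e ≤ j}.ncard

/-- The split size sequence `s(τ)_i = min{j : m(τ)_j ≥ i}` (the left inverse of `m(τ)`). -/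
noncomputable def sseq (T : PhyloTree n V) (i : ℕ) : ℕ :=
  sInf {j | i ≤ mseq T j}

def IsLeaf (T : PhyloTree n V) (v : V) : Prop := (T.G.neighborSet v).ncard = 1

/-- A binary (fully resolved) tree: every vertex has degree 1 or 3. -/
def IsBinary (T : PhyloTree n V) : Prop :=
  ∀ v : V, (T.G.neighborSet v).ncard = 1 ∨ (T.G.neighborSet v).ncard = 3

/-- A caterpillar: a binary tree in which every inner vertex is adjacent to a leaf
(equivalently, the inner vertices form a path / there are exactly two cherries). -/
def IsCaterpillar (T : PhyloTree n V) : Prop :=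
  IsBinary T ∧ ∀ v : V, ¬ IsLeaf T v → ∃ w : V, T.G.Adj v w ∧ IsLeaf T w

/-- A single NNI move across the inner edge `{u,v}`: the subtrees hanging at `a`
(on the `u` side) and at `b` (on the `v` side) are swapped. -/
def NNIMove (T T' : PhyloTree n V) : Prop :=
  ∃ u v a b : V, T.G.Adj u v ∧ ¬ IsLeaf T u ∧ ¬ IsLeaf T v ∧
    T.G.Adj u a ∧ T.G.Adj v b ∧ a ≠ v ∧ b ≠ u ∧
    T'.leaf = T.leaf ∧
    T'.G.edgeSet = (T.G.edgeSet \ {s(u, a), s(v, b)}) ∪ {s(u, b), s(v, a)}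

/-- The number of cherries = number of non-trivial splits of size exactly 2. -/
noncomputable def numCherries (T : PhyloTree n V) : ℕ :=
  {e : Sym2 V | e ∈ T.G.edgeSet ∧ splitSizeE T e = 2}.ncard

/-!
Deleting an edge `uv` of a tree splits the leaves into the two sides; at a vertex `v` of degree
three with neighbours `u, a, b` (and `v` not a leaf) the three sides behind `u`, `a`, `b`
partition the leaves. Since every side contains a leaf, an edge `uv` realising the maximal split
size `M`, with `u` on its smaller side, has an inner vertex `v` whose other two sides have at
most `M` leaves each, whence `n ≤ 3M`. The bound `M ≤ n / 2` holds because the two sides of an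
edge add up to `n`.
-/

namespace SimpleGraph

section EdgeSide

variable {α : Type*} (G : SimpleGraph α)

def edgeSide (u v : α) : Set α := {w | (G.deleteEdges {s(u, v)}).Reachable w u}

variable {G} {u v w a c : α}

lemma mem_edgeSide_iff_swap : w ∈ G.edgeSide u v ↔ (G.deleteEdges {s(v, u)}).Reachable w u := by
  rw [Sym2.eq_swap]; rfl

lemma self_mem_edgeSide : u ∈ G.edgeSide u v := Reachable.refl u

lemma edgeSide_eq_singleton (h : G.neighborSet u = {v}) : G.edgeSide u v = {u} := by
  refine Set.eq_singleton_iff_unique_mem.mpr ⟨self_mem_edgeSide, fun w hw => ?_⟩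
  obtain ⟨p⟩ := Reachable.symm hw
  cases p with
  | nil => rfl
  | cons hadj _ =>
    obtain ⟨hadj, hne⟩ := deleteEdges_adj.mp hadj
    have hv : _ ∈ G.neighborSet u := hadj
    rw [h, Set.mem_singleton_iff] at hv
    exact absurd (Set.mem_singleton_iff.mpr (congrArg (s(u, ·)) hv)) hne

lemma exists_adj_mem_edgeSide (h : G.Reachable v w) (hne : w ≠ v) :
    ∃ x, G.Adj v x ∧ w ∈ G.edgeSide x v := by
  obtain ⟨p, hp⟩ := h.exists_isPath
  cases p with
  | nil => exact absurd rfl hne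
  | @cons _ x _ hvx q =>
    refine ⟨x, hvx, reachable_deleteEdges_iff_exists_walk.mpr ⟨q.reverse, fun he => ?_⟩⟩
    rw [Walk.edges_reverse, List.mem_reverse] at he
    exact ((Walk.cons_isPath_iff hvx q).mp hp).2 (q.snd_mem_support_of_mem_edges he)

lemma IsAcyclic.notMem_edgeSide (hG : G.IsAcyclic) (h : G.Adj u v) : v ∉ G.edgeSide u v :=
  fun hv => isBridge_iff.mp (isAcyclic_iff_forall_adj_isBridge.mp hG h) hv.symm

lemma IsAcyclic.disjoint_edgeSide (hG : G.IsAcyclic) (h : G.Adj u v) :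
    Disjoint (G.edgeSide u v) (G.edgeSide v u) :=
  Set.disjoint_left.mpr fun _ hu hv =>
    hG.notMem_edgeSide h ((mem_edgeSide_iff_swap.mp hv).symm.trans hu)

lemma IsAcyclic.edgeSide_subset_edgeSide (hG : G.IsAcyclic) (ha : G.Adj v a) (hac : a ≠ c) :
    G.edgeSide a v ⊆ G.edgeSide v c := by
  rintro w ⟨p⟩
  have hv : v ∉ p.support := fun hv => by
    obtain ⟨-, r, -⟩ := p.mem_support_iff_exists_append.mp hv
    exact hG.notMem_edgeSide ha.symm ⟨r⟩
  have hwa : (G.deleteEdges {s(v, c)}).Reachable w a := by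
    refine reachable_deleteEdges_iff_exists_walk.mpr ⟨p.mapLe (deleteEdges_le _), fun he => hv ?_⟩
    simpa using (p.mapLe (deleteEdges_le _)).fst_mem_support_of_mem_edges he
  refine hwa.trans (Adj.reachable (deleteEdges_adj.mpr ⟨ha.symm, ?_⟩))
  simp [hac, ha.ne.symm]

lemma IsAcyclic.disjoint_edgeSide_of_ne (hG : G.IsAcyclic) (ha : G.Adj v a) (hc : G.Adj v c)
    (hac : a ≠ c) : Disjoint (G.edgeSide a v) (G.edgeSide c v) :=
  (hG.disjoint_edgeSide hc.symm).symm.mono_left (hG.edgeSide_subset_edgeSide ha hac)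

lemma IsTree.mem_edgeSide_or (hG : G.IsTree) (h : G.Adj u v) (w : α) :
    w ∈ G.edgeSide u v ∨ w ∈ G.edgeSide v u := by
  rcases eq_or_ne w u with rfl | hwu
  · exact .inl self_mem_edgeSide
  obtain ⟨x, hux, hw⟩ := exists_adj_mem_edgeSide (hG.connected.preconnected u w) hwu
  rcases eq_or_ne x v with rfl | hxv
  · exact .inr hw
  · exact .inl (hG.isAcyclic.edgeSide_subset_edgeSide hux hxv hw)

end EdgeSide

end SimpleGraph

open SimpleGraph

lemma Set.exists_eq_insert_pair_of_ncard_eq_three {α : Type*} {s : Set α} {u : α}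
    (hs : s.ncard = 3) (hu : u ∈ s) : ∃ a b, u ≠ a ∧ u ≠ b ∧ a ≠ b ∧ s = {u, a, b} := by
  obtain ⟨a, b, hab, hs'⟩ :=
    Set.ncard_eq_two.mp (by rw [Set.ncard_sdiff_singleton_of_mem hu, hs] : (s \ {u}).ncard = 2)
  have ha : a ∈ s \ {u} := hs' ▸ Set.mem_insert a {b}
  have hb : b ∈ s \ {u} := hs' ▸ Set.mem_insert_of_mem a rfl
  refine ⟨a, b, fun h => ha.2 h.symm, fun h => hb.2 h.symm, hab, ?_⟩
  rw [← hs', Set.insert_sdiff_singleton, Set.insert_eq_of_mem hu]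

section SplitSide

variable {α : Type} {G : SimpleGraph α} {u v a b : α}

lemma splitSide_eq_ncard_preimage (leaf : Fin n → α) (u v : α) :
    splitSide G leaf u v = (leaf ⁻¹' G.edgeSide u v).ncard := rfl

lemma SimpleGraph.IsTree.splitSide_add_splitSide (hG : G.IsTree) (leaf : Fin n → α)
    (h : G.Adj u v) :
    splitSide G leaf u v + splitSide G leaf v u = n := by
  have hcover : leaf ⁻¹' (G.edgeSide u v ∪ G.edgeSide v u) = Set.univ :=
    Set.eq_univ_of_forall fun i => hG.mem_edgeSide_or h (leaf i)
  rw [splitSide_eq_ncard_preimage, splitSide_eq_ncard_preimage,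
    ← Set.ncard_union_eq ((hG.isAcyclic.disjoint_edgeSide h).preimage leaf), ← Set.preimage_union,
    hcover, Set.ncard_univ, Nat.card_eq_fintype_card, Fintype.card_fin]

lemma SimpleGraph.IsTree.splitSide_add_splitSide_add_splitSide (hG : G.IsTree)
    (leaf : Fin n → α) (hnb : G.neighborSet v = {u, a, b}) (hua : u ≠ a) (hub : u ≠ b) (hab : a ≠ b)
    (hv : v ∉ Set.range leaf) :
    splitSide G leaf u v + splitSide G leaf a v + splitSide G leaf b v = n := by
  have hadj : ∀ x, G.Adj v x ↔ x = u ∨ x = a ∨ x = b := fun x => by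
    rw [← mem_neighborSet, hnb]; rfl
  have hvu := (hadj u).mpr (.inl rfl)
  have hva := (hadj a).mpr (.inr (.inl rfl))
  have hvb := (hadj b).mpr (.inr (.inr rfl))
  have hcover : leaf ⁻¹' (G.edgeSide u v ∪ G.edgeSide a v ∪ G.edgeSide b v) = Set.univ := by
    refine Set.eq_univ_of_forall fun i => ?_
    obtain ⟨x, hvx, hx⟩ := exists_adj_mem_edgeSide (hG.connected.preconnected v (leaf i))
      fun h => hv ⟨i, h⟩
    rcases (hadj x).mp hvx with rfl | rfl | rfl <;> simp [hx]
  rw [splitSide_eq_ncard_preimage, splitSide_eq_ncard_preimage, splitSide_eq_ncard_preimage,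
    ← Set.ncard_union_eq ((hG.isAcyclic.disjoint_edgeSide_of_ne hvu hva hua).preimage leaf),
    ← Set.ncard_union_eq (Set.disjoint_union_left.mpr
      ⟨(hG.isAcyclic.disjoint_edgeSide_of_ne hvu hvb hub).preimage leaf,
        (hG.isAcyclic.disjoint_edgeSide_of_ne hva hvb hab).preimage leaf⟩),
    ← Set.preimage_union, ← Set.preimage_union, hcover, Set.ncard_univ, Nat.card_eq_fintype_card,
    Fintype.card_fin]

end SplitSide

namespace PhyloTree

variable (T : PhyloTree n V) {u v x y : V}

lemma neighborSet_eq_singleton (hx : IsLeaf T x) (h : T.G.Adj x y) : T.G.neighborSet x = {y} := by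
  obtain ⟨z, hz⟩ := Set.ncard_eq_one.mp hx
  rwa [Set.mem_singleton_iff.mp (hz ▸ h : y ∈ ({z} : Set V))]

lemma splitSide_le_one (hx : IsLeaf T x) (h : T.G.Adj x y) : splitSide T.G T.leaf x y ≤ 1 := by
  rw [splitSide_eq_ncard_preimage, edgeSide_eq_singleton (T.neighborSet_eq_singleton hx h)]
  exact (Set.ncard_le_one_iff (Set.toFinite _)).mpr fun hi hj => T.leaf_inj (hi.trans hj.symm)

lemma notMem_range_leaf (hv : ¬ IsLeaf T v) : v ∉ Set.range T.leaf :=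
  fun ⟨i, hi⟩ => hv ((T.leaf_iff v).mpr ⟨i, hi⟩)

lemma splitSide_pos (h : T.G.Adj x y) : 0 < splitSide T.G T.leaf x y := by
  suffices ∃ i, T.leaf i ∈ T.G.edgeSide x y from (Set.ncard_pos (Set.toFinite _)).mpr this
  induction hm : (T.G.edgeSide x y).ncard using Nat.strong_induction_on generalizing x y with
  | _ m ih =>
  by_cases hx : IsLeaf T x
  · obtain ⟨i, hi⟩ := (T.leaf_iff x).mp hx
    exact ⟨i, hi ▸ self_mem_edgeSide⟩
  have hdeg : 1 < (T.G.neighborSet x).ncard :=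
    lt_of_le_of_ne ((Set.ncard_pos (Set.toFinite _)).mpr ⟨y, h⟩) (Ne.symm hx)
  obtain ⟨a, hxa, hay⟩ := Set.exists_ne_of_one_lt_ncard hdeg y
  have hsub := T.isTree.isAcyclic.edgeSide_subset_edgeSide hxa hay
  have hssub : T.G.edgeSide a x ⊂ T.G.edgeSide x y :=
    (Set.ssubset_iff_of_subset hsub).mpr
      ⟨x, self_mem_edgeSide, T.isTree.isAcyclic.notMem_edgeSide hxa.symm⟩
  obtain ⟨i, hi⟩ := ih _ (hm ▸ Set.ncard_lt_ncard hssub) hxa.symm rfl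
  exact ⟨i, hsub hi⟩

lemma exists_neighborSet_eq_of_isBinary (hbin : IsBinary T) (hv : ¬ IsLeaf T v)
    (h : T.G.Adj v u) : ∃ a b, u ≠ a ∧ u ≠ b ∧ a ≠ b ∧ T.G.neighborSet v = {u, a, b} :=
  Set.exists_eq_insert_pair_of_ncard_eq_three ((hbin v).resolve_left hv) h

lemma splitSizeE_mk (u v : V) :
    splitSizeE T s(u, v) = min (splitSide T.G T.leaf u v) (splitSide T.G T.leaf v u) := rfl

lemma splitSizeE_le_half {e : Sym2 V} (he : e ∈ T.G.edgeSet) : splitSizeE T e ≤ n / 2 := by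
  induction e using Sym2.ind with
  | _ u v =>
    have := T.isTree.splitSide_add_splitSide T.leaf (T.G.mem_edgeSet.mp he)
    rw [splitSizeE_mk]
    omega

/-- The neighbour `p` of a leaf is inner, and one of the two other sides at `p` holds at least
two of the remaining `n - 1 ≥ 3` leaves. -/
lemma exists_two_le_splitSizeE (hn : 4 ≤ n) (hbin : IsBinary T) :
    ∃ e ∈ T.G.edgeSet, 2 ≤ splitSizeE T e := by
  set l := T.leaf ⟨0, by omega⟩
  have hl : IsLeaf T l := (T.leaf_iff l).mpr ⟨_, rfl⟩
  obtain ⟨p, hlp⟩ : ∃ p, T.G.Adj l p := by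
    obtain ⟨p, hp⟩ := Set.ncard_eq_one.mp hl
    exact ⟨p, (hp ▸ Set.mem_singleton p : p ∈ T.G.neighborSet l)⟩
  have hlp_add := T.isTree.splitSide_add_splitSide T.leaf hlp
  have hlp_le := T.splitSide_le_one hl hlp
  have hp : ¬ IsLeaf T p := fun hp => by
    have := T.splitSide_le_one hp hlp.symm
    omega
  obtain ⟨a, b, hla, hlb, hab, hnb⟩ := T.exists_neighborSet_eq_of_isBinary hbin hp hlp.symm
  have hpa : T.G.Adj p a := by rw [← mem_neighborSet, hnb]; simp
  have hpb : T.G.Adj p b := by rw [← mem_neighborSet, hnb]; simp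
  have hsum := T.isTree.splitSide_add_splitSide_add_splitSide T.leaf hnb hla hlb hab
    (T.notMem_range_leaf hp)
  have := T.isTree.splitSide_add_splitSide T.leaf hpa
  have := T.isTree.splitSide_add_splitSide T.leaf hpb
  have := T.splitSide_pos hlp
  have := T.splitSide_pos hpa.symm
  have := T.splitSide_pos hpb.symm
  rcases le_or_gt 2 (splitSide T.G T.leaf a p) with ha | ha
  · exact ⟨s(a, p), hpa.symm, by rw [splitSizeE_mk]; omega⟩
  · exact ⟨s(b, p), hpb.symm, by rw [splitSizeE_mk]; omega⟩

/-- At an inner vertex `v` next to a maximal split `uv`, the subtree behind any other neighbour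
`a` has at most as many leaves as the `u`-side: otherwise the edge `av` would induce a larger
split, its other side containing the `u`-side and a leaf behind the third neighbour. -/
lemma splitSide_le_of_forall_splitSizeE_le {a b : V} (hnb : T.G.neighborSet v = {u, a, b})
    (hua : u ≠ a) (hub : u ≠ b) (hab : a ≠ b) (hv : v ∉ Set.range T.leaf)
    (hmax : ∀ e ∈ T.G.edgeSet, 2 ≤ splitSizeE T e → splitSizeE T e ≤ splitSide T.G T.leaf u v) :
    splitSide T.G T.leaf a v ≤ splitSide T.G T.leaf u v := by
  have hvu : T.G.Adj v u := by rw [← mem_neighborSet, hnb]; simp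
  have hva : T.G.Adj v a := by rw [← mem_neighborSet, hnb]; simp
  have hvb : T.G.Adj v b := by rw [← mem_neighborSet, hnb]; simp
  have hsum := T.isTree.splitSide_add_splitSide_add_splitSide T.leaf hnb hua hub hab hv
  have hadd := T.isTree.splitSide_add_splitSide T.leaf hva
  have hu := T.splitSide_pos hvu.symm
  have hb := T.splitSide_pos hvb.symm
  by_contra! hlt
  have := hmax s(a, v) hva.symm (by rw [splitSizeE_mk]; omega)
  rw [splitSizeE_mk] at this
  omega

lemma le_three_mul_splitSizeE (hbin : IsBinary T) {e : Sym2 V} (he : e ∈ T.G.edgeSet)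
    (h2 : 2 ≤ splitSizeE T e)
    (hmax : ∀ e' ∈ T.G.edgeSet, 2 ≤ splitSizeE T e' → splitSizeE T e' ≤ splitSizeE T e) :
    n ≤ 3 * splitSizeE T e := by
  induction e using Sym2.ind with
  | _ u v =>
  wlog hle : splitSide T.G T.leaf u v ≤ splitSide T.G T.leaf v u generalizing u v
  · rw [Sym2.eq_swap] at he h2 hmax ⊢
    exact this v u he h2 hmax (le_of_not_ge hle)
  have hM : splitSizeE T s(u, v) = splitSide T.G T.leaf u v := min_eq_left hle
  rw [hM] at h2 hmax ⊢
  have hv : ¬ IsLeaf T v := fun hv => by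
    have := T.splitSide_le_one hv (T.G.mem_edgeSet.mp he).symm
    omega
  obtain ⟨a, b, hua, hub, hab, hnb⟩ :=
    T.exists_neighborSet_eq_of_isBinary hbin hv (T.G.mem_edgeSet.mp he).symm
  have hrange := T.notMem_range_leaf hv
  have hsum := T.isTree.splitSide_add_splitSide_add_splitSide T.leaf hnb hua hub hab hrange
  have ha := T.splitSide_le_of_forall_splitSizeE_le hnb hua hub hab hrange hmax
  have hb := T.splitSide_le_of_forall_splitSizeE_le (by rw [hnb, Set.pair_comm]) hub hua
    hab.symm hrange hmax
  omega

end PhyloTree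

/-- Lemma (bounds): for a binary tree on `n ≥ 4` leaves, the maximal non-trivial
split size `M` satisfies `⌈n/3⌉ ≤ M ≤ ⌊n/2⌋`. -/
theorem stmt_11 {n : ℕ} (hn : 4 ≤ n) {V : Type} [Fintype V]
    (T : PhyloTree n V) (hbin : IsBinary T) :
    (n + 2) / 3 ≤ sSup {k | ∃ e ∈ T.G.edgeSet, 2 ≤ splitSizeE T e ∧ splitSizeE T e = k} ∧
      sSup {k | ∃ e ∈ T.G.edgeSet, 2 ≤ splitSizeE T e ∧ splitSizeE T e = k} ≤ n / 2 := by
  set S := {k | ∃ e ∈ T.G.edgeSet, 2 ≤ splitSizeE T e ∧ splitSizeE T e = k}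
  have hle : ∀ k ∈ S, k ≤ n / 2 := by
    rintro k ⟨e, he, -, rfl⟩
    exact T.splitSizeE_le_half he
  have hne : S.Nonempty := by
    obtain ⟨e, he, h2⟩ := T.exists_two_le_splitSizeE hn hbin
    exact ⟨_, e, he, h2, rfl⟩
  have hbdd : BddAbove S := ⟨n / 2, hle⟩
  obtain ⟨e, he, h2, hM⟩ := Nat.sSup_mem hne hbdd
  have hmax : ∀ e' ∈ T.G.edgeSet, 2 ≤ splitSizeE T e' → splitSizeE T e' ≤ splitSizeE T e :=
    fun e' he' h2' => hM ▸ le_csSup hbdd ⟨e', he', h2', rfl⟩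
  have := T.le_three_mul_splitSizeE hbin he h2 hmax
  exact ⟨by omega, csSup_le hne hle⟩
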